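/- In the sum-binding game: let |Ψ⟩_{ERC} be any pure state on registers E, R, C, let U^{(0)}, U^{(1)} be unitaries acting only on E⊗R, and let |ψ_0⟩_{RC}, |ψ_1⟩_{RC} be fixed pure states. Define p_b = ⟨ψ_b| Tr_E(U^{(b)} |Ψ⟩⟨Ψ| U^{(b)†}) |ψ_b⟩. Then p_0 + p_1 ≤ 1 + √(F(σ_0, σ_1)), where σ_b = Tr_R(|ψ_b⟩⟨ψ_b|). -/

import Mathlib

open Matrix ComplexOrder

open Classical in
noncomputable def matSqrt {d : Type*} [Fintype d] [DecidableEq d]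
    (A : Matrix d d ℂ) : Matrix d d ℂ :=
  if h : A.PosSemidef then
    h.1.eigenvectorUnitary.1 * diagonal ((↑) ∘ (√·) ∘ h.1.eigenvalues) *
      (star h.1.eigenvectorUnitary : Matrix d d ℂ)
  else 0

/-- Fidelity `F(ρ,σ) = (Tr √(√σ ρ √σ))²`. -/
noncomputable def fid {d : Type*} [Fintype d] [DecidableEq d]
    (ρ σ : Matrix d d ℂ) : ℝ :=
  ((matSqrt (matSqrt σ * ρ * matSqrt σ)).trace).re ^ 2
/-- Lift a unitary on E⊗R to E⊗R⊗C by tensoring with the identity on C. -/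
noncomputable def liftER {dE dR dC : ℕ}
    (U : Matrix (Fin dE × Fin dR) (Fin dE × Fin dR) ℂ) :
    Matrix (Fin dE × Fin dR × Fin dC) (Fin dE × Fin dR × Fin dC) ℂ :=
  fun p q => if p.2.2 = q.2.2 then U (p.1, p.2.1) (q.1, q.2.1) else 0

/-- Partial trace over the register E (the first factor). -/
noncomputable def ptraceE {dE dR dC : ℕ}
    (M : Matrix (Fin dE × Fin dR × Fin dC) (Fin dE × Fin dR × Fin dC) ℂ) :
    Matrix (Fin dR × Fin dC) (Fin dR × Fin dC) ℂ :=
  fun rc rc' => ∑ e : Fin dE, M (e, rc) (e, rc')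

/-- Partial trace over the register R (the first factor of R × C). -/
noncomputable def ptraceR {dR dC : ℕ}
    (M : Matrix (Fin dR × Fin dC) (Fin dR × Fin dC) ℂ) :
    Matrix (Fin dC) (Fin dC) ℂ :=
  fun c c' => ∑ r : Fin dR, M (r, c) (r, c')



set_option linter.unusedSectionVars false
set_option linter.unusedVariables false
set_option maxHeartbeats 1000000

noncomputable section SumBindingAux
variable {n m : Type*} [Fintype n] [Fintype m] [DecidableEq n] [DecidableEq m]

/-- squared euclidean norm of a complex vector -/
def en (x : n → ℂ) : ℝ := ∑ i, ‖x i‖ ^ 2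

lemma en_nonneg (x : n → ℂ) : 0 ≤ en x := Finset.sum_nonneg fun i _ => sq_nonneg _

lemma dot_self_eq_en (x : n → ℂ) : star x ⬝ᵥ x = (en x : ℂ) := by
  simp only [dotProduct, Pi.star_apply, en]
  push_cast
  refine Finset.sum_congr rfl fun i _ => ?_
  rw [RCLike.star_def, RCLike.conj_mul]
  norm_cast

lemma abs_dot_le (x y : n → ℂ) :
    ‖star x ⬝ᵥ y‖ ≤ Real.sqrt (en x) * Real.sqrt (en y) := by
  have h := norm_inner_le_norm (𝕜 := ℂ) (WithLp.toLp 2 x) (WithLp.toLp 2 y)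
  rw [EuclideanSpace.inner_toLp_toLp, dotProduct_comm] at h
  simpa [EuclideanSpace.norm_eq, en] using h


lemma psd_smul {A : Matrix n n ℂ} (hA : A.PosSemidef) {r : ℝ} (hr : 0 ≤ r) :
    ((r : ℂ) • A).PosSemidef := by
  refine Matrix.PosSemidef.of_dotProduct_mulVec_nonneg ?_ fun x => ?_
  · unfold Matrix.IsHermitian
    rw [conjTranspose_smul, hA.1.eq]
    congr 1
    simp
  · rw [smul_mulVec, dotProduct_smul, smul_eq_mul]
    exact mul_nonneg (by exact_mod_cast Complex.zero_le_real.mpr hr) (hA.dotProduct_mulVec_nonneg x)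

open scoped MatrixOrder in
lemma matSqrt_eq_cfc {A : Matrix n n ℂ} (hA : A.PosSemidef) : matSqrt A = CFC.sqrt A := by
  rw [matSqrt, dif_pos hA, CFC.sqrt_eq_cfc, cfc_nnreal_eq_real _ A hA.nonneg, hA.1.cfc_eq]
  simp only [IsHermitian.cfc, Unitary.conjStarAlgAut_apply]
  congr 3
  funext i
  simp only [Function.comp_apply, Real.coe_sqrt, Real.coe_toNNReal',
    max_eq_left (hA.eigenvalues_nonneg i)]
  rfl

open scoped MatrixOrder in
lemma matSqrt_psd {A : Matrix n n ℂ} (hA : A.PosSemidef) : (matSqrt A).PosSemidef := by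
  rw [matSqrt_eq_cfc hA]; exact nonneg_iff_posSemidef.mp (CFC.sqrt_nonneg A)

open scoped MatrixOrder in
lemma matSqrt_mul_self {A : Matrix n n ℂ} (hA : A.PosSemidef) :
    matSqrt A * matSqrt A = A := by
  rw [matSqrt_eq_cfc hA]; exact CFC.sqrt_mul_sqrt_self A hA.nonneg

lemma matSqrt_herm {A : Matrix n n ℂ} (hA : A.PosSemidef) : (matSqrt A)ᴴ = matSqrt A :=
  (matSqrt_psd hA).1.eq

open scoped MatrixOrder in
/-- uniqueness of the PSD square root -/
lemma matSqrt_eq {A B : Matrix n n ℂ} (hB : B.PosSemidef) (h : B * B = A) :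
    matSqrt A = B := by
  have hA : A.PosSemidef := by
    have := posSemidef_conjTranspose_mul_self B
    rwa [hB.1.eq, h] at this
  rw [matSqrt_eq_cfc hA]
  exact (CFC.sqrt_eq_iff A B hA.nonneg hB.nonneg).mpr h

lemma matSqrt_zero : matSqrt (0 : Matrix n n ℂ) = 0 :=
  matSqrt_eq Matrix.PosSemidef.zero (by simp)

lemma matSqrt_smul (A : Matrix n n ℂ) {r : ℝ} (hr : 0 ≤ r) :
    matSqrt ((r : ℂ) • A) = (Real.sqrt r : ℂ) • matSqrt A := by
  by_cases hA : A.PosSemidef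
  · refine matSqrt_eq (psd_smul (matSqrt_psd hA) (Real.sqrt_nonneg r)) ?_
    rw [smul_mul_smul_comm, matSqrt_mul_self hA, ← Complex.ofReal_mul,
      Real.mul_self_sqrt hr]
  · rcases eq_or_lt_of_le hr with h0 | h0
    · rw [← h0]
      simp [matSqrt_zero]
    · have : ¬ ((r : ℂ) • A).PosSemidef := by
        intro hc
        have := psd_smul hc (le_of_lt (inv_pos.mpr h0))
        rw [smul_smul, ← Complex.ofReal_mul, inv_mul_cancel₀ (ne_of_gt h0)] at this
        simp only [Complex.ofReal_one, one_smul] at this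
        exact hA this
      rw [matSqrt, dif_neg this, matSqrt, dif_neg hA, smul_zero]


lemma fid_nonneg (ρ σ : Matrix n n ℂ) : 0 ≤ fid ρ σ := sq_nonneg _

lemma fid_smul (ρ σ : Matrix n n ℂ) {s t : ℝ} (hs : 0 ≤ s) (ht : 0 ≤ t) :
    fid ((s : ℂ) • ρ) ((t : ℂ) • σ) = s * t * fid ρ σ := by
  have hst : 0 ≤ s * t := mul_nonneg hs ht
  have h1 : matSqrt ((t : ℂ) • σ) * ((s : ℂ) • ρ) * matSqrt ((t : ℂ) • σ)
      = ((s * t : ℝ) : ℂ) • (matSqrt σ * ρ * matSqrt σ) := by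
    rw [matSqrt_smul σ ht]
    simp only [Matrix.smul_mul, Matrix.mul_smul, smul_smul]
    congr 1
    rw [show ((Real.sqrt t : ℂ) * ((s:ℂ) * (Real.sqrt t : ℂ))) = ((Real.sqrt t * Real.sqrt t : ℝ):ℂ) * (s:ℂ) by push_cast; ring,
      Real.mul_self_sqrt ht]
    push_cast; ring
  rw [fid, fid, h1, matSqrt_smul _ hst, Matrix.trace_smul, smul_eq_mul]
  have : ((Real.sqrt (s*t) : ℂ) * (matSqrt (matSqrt σ * ρ * matSqrt σ)).trace).re
      = Real.sqrt (s*t) * ((matSqrt (matSqrt σ * ρ * matSqrt σ)).trace).re := by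
    simp [Complex.mul_re]
  rw [this, mul_pow, Real.sq_sqrt hst]

def dpinv (ev : m → ℝ) : m → ℂ := fun i => if ev i = 0 then 0 else (ev i : ℂ)⁻¹
def suppv (ev : m → ℝ) : m → ℂ := fun i => if ev i = 0 then 0 else 1

lemma star_mulVec_dot (A : Matrix n m ℂ) (x : m → ℂ) (w : n → ℂ) :
    star (A *ᵥ x) ⬝ᵥ w = star x ⬝ᵥ (Aᴴ *ᵥ w) := by
  rw [Matrix.star_mulVec, Matrix.dotProduct_mulVec]

lemma en_eq_re_dot (x : n → ℂ) : en x = (star x ⬝ᵥ x).re := by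
  rw [dot_self_eq_en]; simp

lemma en_mulVec (A : Matrix n m ℂ) (x : m → ℂ) :
    en (A *ᵥ x) = (star x ⬝ᵥ ((Aᴴ * A) *ᵥ x)).re := by
  rw [en_eq_re_dot, star_mulVec_dot, ← Matrix.mulVec_mulVec]

lemma en_eq_of_dot_self_eq {x : n → ℂ} {y : m → ℂ}
    (h : star x ⬝ᵥ x = star y ⬝ᵥ y) : en x = en y := by
  have h2 := h
  rw [dot_self_eq_en, dot_self_eq_en] at h2
  exact_mod_cast h2

/-- polar decomposition: `M = V * √(MᴴM)` with `V` a contraction. -/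
lemma polar (M : Matrix n m ℂ) :
    ∃ V : Matrix n m ℂ, M = V * matSqrt (Mᴴ * M) ∧ ∀ z, en (V *ᵥ z) ≤ en z := by
  have hB : (Mᴴ * M).PosSemidef := posSemidef_conjTranspose_mul_self M
  set S := matSqrt (Mᴴ * M) with hSdef
  have hS : S.PosSemidef := matSqrt_psd hB
  have hSh : S.IsHermitian := hS.1
  set U : Matrix m m ℂ := (hSh.eigenvectorUnitary : Matrix m m ℂ) with hUdef
  have hU1 : U * star U = 1 := Matrix.mem_unitaryGroup_iff.mp hSh.eigenvectorUnitary.2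
  have hU1' : star U * U = 1 := Matrix.mem_unitaryGroup_iff'.mp hSh.eigenvectorUnitary.2
  have cancel₁ : ∀ X : Matrix m m ℂ, star U * (U * X) = X := fun X => by
    rw [← Matrix.mul_assoc, hU1', Matrix.one_mul]
  have cancel₂ : ∀ X : Matrix m m ℂ, U * (star U * X) = X := fun X => by
    rw [← Matrix.mul_assoc, hU1, Matrix.one_mul]
  set ev : m → ℝ := hSh.eigenvalues with hevdef
  have hspec : S = U * diagonal (fun i => (ev i : ℂ)) * star U := by
    exact hSh.spectral_theorem
  have hMM : Mᴴ * M = U * (diagonal (fun i => (ev i : ℂ)) *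
      (diagonal (fun i => (ev i : ℂ)) * star U)) := by
    have h0 : S * S = Mᴴ * M := matSqrt_mul_self hB
    rw [← h0, hspec]
    simp only [Matrix.mul_assoc, cancel₁, cancel₂, hU1, hU1', Matrix.mul_one, Matrix.one_mul]
  -- columns of M*U with zero eigenvalue vanish
  have hcol : ∀ j, ev j = 0 → ∀ i, (M * U) i j = 0 := by
    intro j hj i
    have hG : ((M * U)ᴴ * (M * U)) = diagonal (fun i => (ev i : ℂ)) *
        diagonal (fun i => (ev i : ℂ)) := by
      rw [Matrix.conjTranspose_mul, Matrix.mul_assoc, ← Matrix.mul_assoc Mᴴ M U, hMM,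
        ← Matrix.star_eq_conjTranspose, ← Matrix.mul_assoc]
      simp only [Matrix.mul_assoc, cancel₁, cancel₂, hU1, hU1', Matrix.mul_one, Matrix.one_mul]
    have h1 : ((M * U)ᴴ * (M * U)) j j = 0 := by
      rw [hG, Matrix.diagonal_mul_diagonal, Matrix.diagonal_apply_eq]
      simp [hj]
    have h2 : ∑ k, (‖(M * U) k j‖ ^ 2 : ℝ) = 0 := by
      have h3 : ((∑ k, (‖(M * U) k j‖ ^ 2 : ℝ) : ℝ) : ℂ) = 0 := by
        rw [← h1, Matrix.mul_apply]
        push_cast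
        refine (Finset.sum_congr rfl fun k _ => ?_).symm
        rw [Matrix.conjTranspose_apply, RCLike.star_def, RCLike.conj_mul]
        norm_cast
      exact_mod_cast h3
    have h4 : ‖(M * U) i j‖ ^ 2 = 0 :=
      (Finset.sum_eq_zero_iff_of_nonneg (fun k _ => sq_nonneg _)).mp h2 i (Finset.mem_univ i)
    simpa using h4
  -- M * U * diagonal (dpinv ev * ev) = M * U
  have hq : M * U * diagonal (fun i => dpinv ev i * (ev i : ℂ)) = M * U := by
    ext i j
    rw [Matrix.mul_diagonal]
    by_cases hj : ev j = 0
    · simp [dpinv, hj, hcol j hj i]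
    · have hdj : dpinv ev j * ((ev j : ℂ)) = 1 := by
        simp only [dpinv]
        rw [if_neg hj, inv_mul_cancel₀ (by exact_mod_cast hj)]
      rw [hdj, mul_one]
  refine ⟨M * (U * diagonal (dpinv ev) * star U), ?_, ?_⟩
  · -- M = (M*W) * S
    rw [hspec]
    simp only [Matrix.mul_assoc, cancel₁, cancel₂, hU1, hU1', Matrix.mul_one, Matrix.one_mul]
    simp only [← Matrix.mul_assoc]
    rw [Matrix.mul_assoc (M * U) (diagonal (dpinv ev)), Matrix.diagonal_mul_diagonal, hq,
      Matrix.mul_assoc, hU1, Matrix.mul_one]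
  · -- contraction
    intro z
    have hsdp : star (dpinv ev) = dpinv ev := by
      funext i
      simp only [Pi.star_apply, dpinv]
      split <;> simp
    have hdd : (diagonal (dpinv ev))ᴴ = diagonal (dpinv ev) := by
      rw [Matrix.diagonal_conjTranspose, hsdp]
    have hdph : (U * diagonal (dpinv ev) * star U)ᴴ = U * diagonal (dpinv ev) * star U := by
      rw [Matrix.conjTranspose_mul, Matrix.conjTranspose_mul, hdd]
      simp only [← Matrix.star_eq_conjTranspose, star_star]
      rw [Matrix.mul_assoc]
    have hVV : (M * (U * diagonal (dpinv ev) * star U))ᴴ * (M * (U * diagonal (dpinv ev) * star U)) =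
        U * diagonal (suppv ev) * star U := by
      rw [Matrix.conjTranspose_mul, Matrix.mul_assoc,
        ← Matrix.mul_assoc Mᴴ M (U * diagonal (dpinv ev) * star U), hMM, hdph]
      simp only [Matrix.mul_assoc, cancel₁, cancel₂, hU1, hU1', Matrix.mul_one, Matrix.one_mul]
      simp only [← Matrix.mul_assoc]
      congr 1
      simp only [Matrix.mul_assoc]
      congr 1
      rw [Matrix.diagonal_mul_diagonal, Matrix.diagonal_mul_diagonal,
        Matrix.diagonal_mul_diagonal]
      refine congrArg Matrix.diagonal ?_
      funext i
      by_cases hi : ev i = 0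
      · simp [dpinv, suppv, hi]
      · have h5 : (ev i : ℂ) ≠ 0 := by exact_mod_cast hi
        simp only [dpinv, suppv, if_neg hi]
        field_simp
    set w : m → ℂ := star U *ᵥ z with hwdef
    have henz : en ((M * (U * diagonal (dpinv ev) * star U)) *ᵥ z)
        = (star w ⬝ᵥ (diagonal (suppv ev) *ᵥ w)).re := by
      rw [en_mulVec, hVV]
      rw [← Matrix.mulVec_mulVec, ← Matrix.mulVec_mulVec]
      have h6 : star z ⬝ᵥ (U *ᵥ (diagonal (suppv ev) *ᵥ w))
          = star ((star U) *ᵥ z) ⬝ᵥ (diagonal (suppv ev) *ᵥ w) := by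
        rw [star_mulVec_dot, ← Matrix.star_eq_conjTranspose, star_star]
      rw [h6, hwdef]
    rw [henz]
    have hw : en w = en z := by
      refine en_eq_of_dot_self_eq ?_
      rw [hwdef, star_mulVec_dot, Matrix.mulVec_mulVec, ← Matrix.star_eq_conjTranspose,
        star_star, hU1, Matrix.one_mulVec]
    have hle : (star w ⬝ᵥ (diagonal (suppv ev) *ᵥ w)).re ≤ en w := by
      rw [dotProduct, Complex.re_sum, en]
      refine Finset.sum_le_sum fun i _ => ?_
      rw [Matrix.mulVec_diagonal]
      by_cases hi : ev i = 0
      · simp [suppv, hi, sq_nonneg]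
      · simp only [suppv]
        rw [if_neg hi, one_mul, Pi.star_apply, RCLike.star_def, RCLike.conj_mul]
        norm_cast
    rw [← hw]
    exact hle

lemma contraction_conjTranspose {V : Matrix n m ℂ} (hV : ∀ z, en (V *ᵥ z) ≤ en z) :
    ∀ z, en (Vᴴ *ᵥ z) ≤ en z := by
  intro z
  set w := Vᴴ *ᵥ z with hw
  have h1 : en w = (star z ⬝ᵥ (V *ᵥ w)).re := by
    rw [en_eq_re_dot, hw]
    congr 1
    rw [star_mulVec_dot, Matrix.conjTranspose_conjTranspose]
  have h2 : en w ≤ Real.sqrt (en z) * Real.sqrt (en w) := by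
    have c1 : (star z ⬝ᵥ (V *ᵥ w)).re ≤ ‖star z ⬝ᵥ (V *ᵥ w)‖ := Complex.re_le_norm _
    have c2 : ‖star z ⬝ᵥ (V *ᵥ w)‖
        ≤ Real.sqrt (en z) * Real.sqrt (en (V *ᵥ w)) := abs_dot_le _ _
    have c3 : Real.sqrt (en (V *ᵥ w)) ≤ Real.sqrt (en w) := Real.sqrt_le_sqrt (hV w)
    have c4 : Real.sqrt (en z) * Real.sqrt (en (V *ᵥ w))
        ≤ Real.sqrt (en z) * Real.sqrt (en w) :=
      mul_le_mul_of_nonneg_left c3 (Real.sqrt_nonneg _)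
    exact le_of_eq_of_le h1 (c1.trans (c2.trans c4))
  have ha : Real.sqrt (en w) ^ 2 = en w := Real.sq_sqrt (en_nonneg w)
  have hb : Real.sqrt (en z) ^ 2 = en z := Real.sq_sqrt (en_nonneg z)
  nlinarith [Real.sqrt_nonneg (en w), Real.sqrt_nonneg (en z),
    sq_nonneg (Real.sqrt (en w) - Real.sqrt (en z))]

lemma trace_bound {S K : Matrix m m ℂ} (hS : S.PosSemidef) (hK : ∀ z, en (K *ᵥ z) ≤ en z) :
    ‖(S * K).trace‖ ≤ S.trace.re := by
  have hSh : S.IsHermitian := hS.1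
  set U : Matrix m m ℂ := (hSh.eigenvectorUnitary : Matrix m m ℂ) with hUdef
  have hU1 : U * star U = 1 := Matrix.mem_unitaryGroup_iff.mp hSh.eigenvectorUnitary.2
  have hU1' : star U * U = 1 := Matrix.mem_unitaryGroup_iff'.mp hSh.eigenvectorUnitary.2
  set ev : m → ℝ := hSh.eigenvalues with hevdef
  have hev : ∀ i, 0 ≤ ev i := hS.eigenvalues_nonneg
  have hspec : S = U * diagonal (fun i => (ev i : ℂ)) * star U := by
    exact hSh.spectral_theorem
  -- column vectors are unit
  have hcol : ∀ i, en (fun a => U a i) = 1 := by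
    intro i
    rw [en_eq_re_dot]
    have : star (fun a => U a i) ⬝ᵥ (fun a => U a i) = (star U * U) i i := by
      simp [Matrix.mul_apply, dotProduct]
    rw [this, hU1', Matrix.one_apply_eq]
    simp
  have hYii : ∀ i, ‖(star U * K * U) i i‖ ≤ 1 := by
    intro i
    have hform : (star U * K * U) i i
        = star (fun a => U a i) ⬝ᵥ (K *ᵥ (fun a => U a i)) := by
      simp only [Matrix.mul_apply, Matrix.mulVec, dotProduct, Pi.star_apply,
        Matrix.star_apply, Finset.sum_mul, Finset.mul_sum]
      rw [Finset.sum_comm]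
      refine Finset.sum_congr rfl fun a _ => Finset.sum_congr rfl fun b _ => by ring
    have e1 : en (K *ᵥ (fun a => U a i)) ≤ 1 := by
      have := hK (fun a => U a i)
      rwa [hcol i] at this
    have e2 : ‖(star (fun a => U a i)) ⬝ᵥ (K *ᵥ (fun a => U a i))‖
        ≤ Real.sqrt (en (fun a => U a i)) * Real.sqrt (en (K *ᵥ (fun a => U a i))) :=
      abs_dot_le _ _
    rw [hform]
    refine e2.trans ?_
    rw [hcol i, Real.sqrt_one, one_mul]
    exact Real.sqrt_le_one.mpr e1
  -- trace identities
  have htr : (S * K).trace = ∑ i, (ev i : ℂ) * ((star U * K * U) i i) := by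
    rw [hspec]
    rw [show U * diagonal (fun i => (ev i : ℂ)) * star U * K
        = U * (diagonal (fun i => (ev i : ℂ)) * star U * K) by
      simp only [Matrix.mul_assoc]]
    rw [Matrix.trace_mul_comm]
    rw [Matrix.mul_assoc (diagonal (fun i => (ev i : ℂ))) (star U) K,
      Matrix.mul_assoc (diagonal (fun i => (ev i : ℂ))) (star U * K) U]
    rw [Matrix.trace]
    refine Finset.sum_congr rfl fun i _ => ?_
    rw [Matrix.diag_apply, Matrix.diagonal_mul]
  have habs : ‖(S * K).trace‖ ≤ ∑ i, ev i := by
    rw [htr]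
    refine (norm_sum_le _ _).trans ?_
    refine Finset.sum_le_sum fun i _ => ?_
    rw [norm_mul, Complex.norm_real, Real.norm_eq_abs, abs_of_nonneg (hev i)]
    calc ev i * ‖(star U * K * U) i i‖ ≤ ev i * 1 :=
          mul_le_mul_of_nonneg_left (hYii i) (hev i)
      _ = ev i := mul_one _
  have htrS : S.trace.re = ∑ i, ev i := by
    rw [hspec, Matrix.trace_mul_comm,
      show star U * (U * diagonal (fun i => (ev i : ℂ))) = diagonal (fun i => (ev i : ℂ)) from by
        rw [← Matrix.mul_assoc, hU1', Matrix.one_mul],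
      Matrix.trace_diagonal]
    simp
  rw [htrS]
  exact habs

lemma psd_trace_re_nonneg {A : Matrix n n ℂ} (hA : A.PosSemidef) : 0 ≤ A.trace.re := by
  rw [Matrix.trace]
  rw [Complex.re_sum]
  refine Finset.sum_nonneg fun i _ => ?_
  have h := hA.dotProduct_mulVec_nonneg (fun j => if j = i then 1 else 0)
  have hd : star (fun j => if j = i then (1:ℂ) else 0) ⬝ᵥ
      (A *ᵥ (fun j => if j = i then 1 else 0)) = A i i := by
    simp [dotProduct, Matrix.mulVec, Finset.sum_ite_eq]
  rw [hd] at h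
  exact (Complex.le_def.mp h).1

/-- The core inequality: `|Tr(XᴴY)|² ≤ F(XᴴX, YᴴY)`. -/
lemma core_fid (X Y : Matrix n m ℂ) :
    ‖(Xᴴ * Y).trace‖ ^ 2 ≤ fid (Xᴴ * X) (Yᴴ * Y) := by
  have hB : (Yᴴ * Y).PosSemidef := posSemidef_conjTranspose_mul_self Y
  obtain ⟨V, hYV, hVc⟩ := polar Y
  set SB := matSqrt (Yᴴ * Y) with hSB
  set N := X * SB with hN
  have hNH : Nᴴ = SB * Xᴴ := by
    rw [hN, Matrix.conjTranspose_mul, matSqrt_herm hB]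
  have hNN : Nᴴ * N = SB * (Xᴴ * X) * SB := by
    rw [hNH, hN]
    simp only [Matrix.mul_assoc]
  have hA' : (Nᴴ * N).PosSemidef := posSemidef_conjTranspose_mul_self N
  obtain ⟨V', hNV', hV'c⟩ := polar N
  set SA := matSqrt (Nᴴ * N) with hSA
  have hSApsd : SA.PosSemidef := matSqrt_psd hA'
  have hSAH : SAᴴ = SA := by rw [hSA]; exact matSqrt_herm hA'
  -- trace identity
  have htr : (Xᴴ * Y).trace = (SA * (V'ᴴ * V)).trace := by
    conv_lhs => rw [hYV, ← Matrix.mul_assoc]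
    rw [Matrix.trace_mul_comm, ← Matrix.mul_assoc, ← hNH]
    conv_lhs => rw [hNV']
    rw [Matrix.conjTranspose_mul, hSAH, Matrix.mul_assoc]
  have hKc : ∀ z, en ((V'ᴴ * V) *ᵥ z) ≤ en z := by
    intro z
    rw [← Matrix.mulVec_mulVec]
    exact (contraction_conjTranspose hV'c _).trans (hVc z)
  have hfid : fid (Xᴴ * X) (Yᴴ * Y) = SA.trace.re ^ 2 := by
    simp only [fid]
    rw [← hSB, ← hNN, ← hSA]
  rw [hfid, htr]
  have h1 := trace_bound hSApsd hKc
  have h2 : (0:ℝ) ≤ ‖(SA * (V'ᴴ * V)).trace‖ := norm_nonneg _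
  calc ‖(SA * (V'ᴴ * V)).trace‖ ^ 2 ≤ SA.trace.re ^ 2 := by
        apply pow_le_pow_left₀ h2 h1

lemma dot_conjTranspose_mulVec {k : Type*} [Fintype k] [DecidableEq k]
    (A : Matrix k k ℂ) (hA : A * Aᴴ = 1) (x y : k → ℂ) :
    star (Aᴴ *ᵥ x) ⬝ᵥ (Aᴴ *ᵥ y) = star x ⬝ᵥ y := by
  rw [star_mulVec_dot, Matrix.mulVec_mulVec, Matrix.conjTranspose_conjTranspose, hA,
    Matrix.one_mulVec]

lemma conj_vecMulVec {k : Type*} [Fintype k] (A : Matrix k k ℂ) (u : k → ℂ) :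
    A * vecMulVec u (star u) * Aᴴ = vecMulVec (A *ᵥ u) (star (A *ᵥ u)) := by
  have h1 : A * vecMulVec u (star u) = vecMulVec (A *ᵥ u) (star u) := by
    ext p j
    simp only [Matrix.mul_apply, Matrix.vecMulVec_apply, Pi.star_apply, Matrix.mulVec,
      dotProduct]
    rw [Finset.sum_mul]
    exact Finset.sum_congr rfl fun i _ => by ring
  rw [h1]
  ext p q
  simp only [Matrix.mul_apply, Matrix.vecMulVec_apply, Matrix.conjTranspose_apply,
    Pi.star_apply, Matrix.mulVec, dotProduct, star_sum, star_mul', Finset.mul_sum]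
  exact Finset.sum_congr rfl fun j _ => by ring

lemma sum_triple {dE dR dC : ℕ} {M : Type*} [AddCommMonoid M]
    (f : Fin dE × Fin dR × Fin dC → M) :
    ∑ p, f p = ∑ c, ∑ er : Fin dE × Fin dR, f (er.1, er.2, c) := by
  rw [Fintype.sum_prod_type]
  simp_rw [Fintype.sum_prod_type]
  calc ∑ e, ∑ r, ∑ c, f (e, r, c) = ∑ e, ∑ c, ∑ r, f (e, r, c) :=
        Finset.sum_congr rfl fun e _ => Finset.sum_comm
    _ = ∑ c, ∑ e, ∑ r, f (e, r, c) := Finset.sum_comm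


/-- For one commitment branch build the vector `u` witnessing everything we need. -/
lemma side {dE dR dC : ℕ} (Ψ : Fin dE × Fin dR × Fin dC → ℂ)
    (U : Matrix (Fin dE × Fin dR) (Fin dE × Fin dR) ℂ)
    (hU : U ∈ Matrix.unitaryGroup (Fin dE × Fin dR) ℂ)
    (ψ : Fin dR × Fin dC → ℂ) (hψ : ∑ p, ‖ψ p‖ ^ 2 = 1) :
    ∃ (u : Fin dE × Fin dR × Fin dC → ℂ) (q : ℝ),
      0 ≤ q ∧
      (star ψ ⬝ᵥ (ptraceE (liftER U * vecMulVec Ψ (star Ψ) * (liftER U)ᴴ)).mulVec ψ)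
        = (q : ℂ) ∧
      star Ψ ⬝ᵥ u = (q : ℂ) ∧
      en u = q ∧
      (∀ c c', (∑ er : Fin dE × Fin dR, u (er.1, er.2, c) * star (u (er.1, er.2, c')))
        = (q : ℂ) * ptraceR (vecMulVec ψ (star ψ)) c c') := by
  have hUU : U * Uᴴ = 1 := by
    have := Matrix.mem_unitaryGroup_iff.mp hU
    rwa [Matrix.star_eq_conjTranspose] at this
  set Φ : Fin dE × Fin dR × Fin dC → ℂ := liftER U *ᵥ Ψ with hΦ
  set T : Matrix (Fin dE) (Fin dR × Fin dC) ℂ := fun e rc => star (Φ (e, rc.1, rc.2)) with hT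
  set d : Fin dE → ℂ := T *ᵥ ψ with hd
  set w : Fin dE × Fin dR × Fin dC → ℂ := fun p => star (d p.1) * ψ (p.2.1, p.2.2) with hw
  set u : Fin dE × Fin dR × Fin dC → ℂ := (liftER U)ᴴ *ᵥ w with hu
  refine ⟨u, en d, en_nonneg d, ?_, ?_, ?_, ?_⟩
  · -- probability = en d
    rw [conj_vecMulVec]
    have hpt : ptraceE (vecMulVec Φ (star Φ)) = Tᴴ * T := by
      ext rc rc'
      simp only [Matrix.mul_apply, Matrix.conjTranspose_apply]
      simp only [ptraceE, Matrix.vecMulVec_apply, Pi.star_apply, Matrix.mul_apply,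
        Matrix.conjTranspose_apply, hT, star_star]
    rw [hpt, ← Matrix.mulVec_mulVec, ← star_mulVec_dot, dot_self_eq_en, ← hd]
  · -- overlap with Ψ
    rw [hu, ← star_mulVec_dot, ← hΦ]
    simp only [dotProduct, Pi.star_apply]
    rw [Fintype.sum_prod_type]
    have hpe : ∀ e, ∑ rc : Fin dR × Fin dC, star (Φ (e, rc)) * w (e, rc)
        = star (d e) * d e := by
      intro e
      have hde : d e = ∑ rc : Fin dR × Fin dC, star (Φ (e, rc)) * ψ rc := by
        rw [hd]
        simp only [Matrix.mulVec, dotProduct, hT, Prod.mk.eta]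
      calc ∑ rc : Fin dR × Fin dC, star (Φ (e, rc)) * w (e, rc)
          = ∑ rc : Fin dR × Fin dC, star (d e) * (star (Φ (e, rc)) * ψ rc) := by
            refine Finset.sum_congr rfl fun rc _ => ?_
            have hwv : w (e, rc) = star (d e) * ψ rc := by rw [hw]
            rw [hwv]
            ring
        _ = star (d e) * d e := by rw [← Finset.mul_sum, ← hde]
    rw [Finset.sum_congr rfl fun e _ => hpe e]
    have hsd : ∑ e, star (d e) * d e = star d ⬝ᵥ d := by
      simp [dotProduct]
    rw [hsd, dot_self_eq_en]
  · -- norm of u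
    have hslice : ∀ c, (fun er : Fin dE × Fin dR => u (er.1, er.2, c))
        = Uᴴ *ᵥ (fun er => w (er.1, er.2, c)) := by
      intro c
      funext er
      rw [hu]
      simp only [Matrix.mulVec, dotProduct, Matrix.conjTranspose_apply, liftER]
      rw [Fintype.sum_prod_type]
      simp_rw [Fintype.sum_prod_type]
      refine Finset.sum_congr rfl fun e' _ => ?_
      simp only [apply_ite (star : ℂ → ℂ), star_zero, ite_mul, zero_mul]
      refine Finset.sum_congr rfl fun r' _ => ?_
      rw [Finset.sum_ite_eq' Finset.univ c
        (fun c' => star (U (e', r') (er.1, er.2)) * w (e', r', c'))]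
      simp
    have h1 : en u = ∑ c, en (fun er : Fin dE × Fin dR => u (er.1, er.2, c)) := by
      rw [en]
      rw [sum_triple (fun p => ‖u p‖ ^ 2)]
      rfl
    have h2 : ∀ c, en (fun er : Fin dE × Fin dR => u (er.1, er.2, c))
        = en (fun er : Fin dE × Fin dR => w (er.1, er.2, c)) := by
      intro c
      rw [hslice c]
      exact en_eq_of_dot_self_eq (dot_conjTranspose_mulVec U hUU _ _)
    have h3 : en w = en d * en ψ := by
      rw [en, en, en, Fintype.sum_prod_type, Finset.sum_mul_sum]
      refine Finset.sum_congr rfl fun e _ => Finset.sum_congr rfl fun rc _ => ?_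
      have hwv : w (e, rc) = star (d e) * ψ rc := by rw [hw]
      rw [hwv, norm_mul, mul_pow, norm_star]
    have h4 : en w = ∑ c, en (fun er : Fin dE × Fin dR => w (er.1, er.2, c)) := by
      rw [en, sum_triple (fun p => ‖w p‖ ^ 2)]
      rfl
    have hψ1 : en ψ = 1 := hψ
    rw [h1, Finset.sum_congr rfl fun c _ => h2 c, ← h4, h3, hψ1, mul_one]
  · -- cross terms
    intro c c'
    have hslice : ∀ c, (fun er : Fin dE × Fin dR => u (er.1, er.2, c))
        = Uᴴ *ᵥ (fun er => w (er.1, er.2, c)) := by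
      intro c
      funext er
      rw [hu]
      simp only [Matrix.mulVec, dotProduct, Matrix.conjTranspose_apply, liftER]
      rw [Fintype.sum_prod_type]
      simp_rw [Fintype.sum_prod_type]
      refine Finset.sum_congr rfl fun e' _ => ?_
      simp only [apply_ite (star : ℂ → ℂ), star_zero, ite_mul, zero_mul]
      refine Finset.sum_congr rfl fun r' _ => ?_
      rw [Finset.sum_ite_eq' Finset.univ c
        (fun c'' => star (U (e', r') (er.1, er.2)) * w (e', r', c''))]
      simp
    have key : star (fun er : Fin dE × Fin dR => u (er.1, er.2, c'))
        ⬝ᵥ (fun er : Fin dE × Fin dR => u (er.1, er.2, c))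
        = star (fun er : Fin dE × Fin dR => w (er.1, er.2, c'))
        ⬝ᵥ (fun er : Fin dE × Fin dR => w (er.1, er.2, c)) := by
      rw [hslice c, hslice c']
      exact dot_conjTranspose_mulVec U hUU _ _
    have lhs_eq : (∑ er : Fin dE × Fin dR, u (er.1, er.2, c) * star (u (er.1, er.2, c')))
        = star (fun er : Fin dE × Fin dR => u (er.1, er.2, c'))
        ⬝ᵥ (fun er : Fin dE × Fin dR => u (er.1, er.2, c)) := by
      simp only [dotProduct, Pi.star_apply]
      exact Finset.sum_congr rfl fun er _ => by ring
    have rhs_eq : star (fun er : Fin dE × Fin dR => w (er.1, er.2, c'))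
        ⬝ᵥ (fun er : Fin dE × Fin dR => w (er.1, er.2, c))
        = (en d : ℂ) * ptraceR (vecMulVec ψ (star ψ)) c c' := by
      simp only [dotProduct, Pi.star_apply]
      have hterm : ∀ er : Fin dE × Fin dR,
          star (w (er.1, er.2, c')) * w (er.1, er.2, c)
          = (d er.1 * star (d er.1)) * (ψ (er.2, c) * star (ψ (er.2, c'))) := by
        intro er
        have hwv1 : w (er.1, er.2, c') = star (d er.1) * ψ (er.2, c') := by rw [hw]
        have hwv2 : w (er.1, er.2, c) = star (d er.1) * ψ (er.2, c) := by rw [hw]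
        rw [hwv1, hwv2, star_mul', star_star]
        ring
      rw [Finset.sum_congr rfl fun er _ => hterm er]
      rw [Fintype.sum_prod_type]
      have : ∑ e, ∑ r, (d e * star (d e)) * (ψ (r, c) * star (ψ (r, c')))
          = (∑ e, d e * star (d e)) * (∑ r, ψ (r, c) * star (ψ (r, c'))) := by
        rw [Finset.sum_mul_sum]
      rw [this]
      have hde2 : ∑ e, d e * star (d e) = star d ⬝ᵥ d := by
        simp only [dotProduct, Pi.star_apply]
        exact Finset.sum_congr rfl fun e _ => by ring
      rw [hde2, dot_self_eq_en]
      rfl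
    rw [lhs_eq, key, rhs_eq]



end SumBindingAux


/-- Sum-binding bound: for any pure state |Ψ⟩ on E⊗R⊗C, unitaries U⁽⁰⁾, U⁽¹⁾ acting
only on E⊗R, and fixed pure states |ψ_0⟩, |ψ_1⟩ on R⊗C, with
p_b = ⟨ψ_b| Tr_E(U⁽ᵇ⁾|Ψ⟩⟨Ψ|U⁽ᵇ⁾†) |ψ_b⟩ we have
p_0 + p_1 ≤ 1 + √(F(σ_0, σ_1)) where σ_b = Tr_R(|ψ_b⟩⟨ψ_b|). -/
theorem sum_binding_bound {dE dR dC : ℕ}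
    (Ψ : Fin dE × Fin dR × Fin dC → ℂ) (hΨ : ∑ p, ‖Ψ p‖ ^ 2 = 1)
    (U₀ U₁ : Matrix (Fin dE × Fin dR) (Fin dE × Fin dR) ℂ)
    (hU₀ : U₀ ∈ Matrix.unitaryGroup (Fin dE × Fin dR) ℂ)
    (hU₁ : U₁ ∈ Matrix.unitaryGroup (Fin dE × Fin dR) ℂ)
    (ψ₀ ψ₁ : Fin dR × Fin dC → ℂ)
    (hψ₀ : ∑ p, ‖ψ₀ p‖ ^ 2 = 1) (hψ₁ : ∑ p, ‖ψ₁ p‖ ^ 2 = 1)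
    (p₀ p₁ : ℝ)
    (hp₀ : p₀ = (star ψ₀ ⬝ᵥ
      (ptraceE (liftER U₀ * vecMulVec Ψ (star Ψ) * (liftER U₀)ᴴ)).mulVec ψ₀).re)
    (hp₁ : p₁ = (star ψ₁ ⬝ᵥ
      (ptraceE (liftER U₁ * vecMulVec Ψ (star Ψ) * (liftER U₁)ᴴ)).mulVec ψ₁).re) :
    p₀ + p₁ ≤ 1 + Real.sqrt
      (fid (ptraceR (vecMulVec ψ₀ (star ψ₀))) (ptraceR (vecMulVec ψ₁ (star ψ₁)))) := by

  obtain ⟨u₀, q₀, hq₀, hA0, hB0, hC0, hD0⟩ := side Ψ U₀ hU₀ ψ₀ hψ₀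
  obtain ⟨u₁, q₁, hq₁, hA1, hB1, hC1, hD1⟩ := side Ψ U₁ hU₁ ψ₁ hψ₁
  have hp₀q : p₀ = q₀ := by rw [hp₀, hA0, Complex.ofReal_re]
  have hp₁q : p₁ = q₁ := by rw [hp₁, hA1, Complex.ofReal_re]
  subst hp₀q hp₁q
  set σ₀ := ptraceR (vecMulVec ψ₀ (star ψ₀)) with hσ₀
  set σ₁ := ptraceR (vecMulVec ψ₁ (star ψ₁)) with hσ₁
  set F := Real.sqrt (fid σ₀ σ₁) with hF
  have hFnn : 0 ≤ F := Real.sqrt_nonneg _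
  -- the cross term bound
  set X : Matrix (Fin dE × Fin dR) (Fin dC) ℂ := fun er c => star (u₀ (er.1, er.2, c)) with hX
  set Y : Matrix (Fin dE × Fin dR) (Fin dC) ℂ := fun er c => star (u₁ (er.1, er.2, c)) with hY
  have hXX : Xᴴ * X = (p₀ : ℂ) • σ₀ := by
    ext c c'
    rw [Matrix.mul_apply]
    simp only [Matrix.conjTranspose_apply]
    simp only [Matrix.conjTranspose_apply, hX, star_star, Matrix.smul_apply, smul_eq_mul]
    exact hD0 c c'
  have hYY : Yᴴ * Y = (p₁ : ℂ) • σ₁ := by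
    ext c c'
    rw [Matrix.mul_apply]
    simp only [Matrix.conjTranspose_apply]
    simp only [Matrix.conjTranspose_apply, hY, star_star, Matrix.smul_apply, smul_eq_mul]
    exact hD1 c c'
  have htrXY : (Xᴴ * Y).trace = star (star u₀ ⬝ᵥ u₁) := by
    rw [Matrix.trace]
    simp only [Matrix.diag_apply, Matrix.mul_apply, Matrix.conjTranspose_apply]
    simp only [Matrix.diag_apply, Matrix.mul_apply, Matrix.conjTranspose_apply, hX, hY,
      star_star]
    rw [show star (star u₀ ⬝ᵥ u₁) = ∑ p, u₀ p * star (u₁ p) from by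
      simp only [dotProduct, Pi.star_apply, star_sum, star_mul', star_star]]
    rw [sum_triple (fun p => u₀ p * star (u₁ p))]
  have hcross2 : ‖star u₀ ⬝ᵥ u₁‖ ^ 2 ≤ p₀ * p₁ * fid σ₀ σ₁ := by
    have h := core_fid X Y
    rw [hXX, hYY, fid_smul σ₀ σ₁ hq₀ hq₁] at h
    have habs : ‖star u₀ ⬝ᵥ u₁‖ = ‖(Xᴴ * Y).trace‖ := by
      rw [htrXY, RCLike.star_def]
      exact (Complex.norm_conj _).symm
    rw [habs]
    exact h
  have hcross : (star u₀ ⬝ᵥ u₁).re ≤ Real.sqrt (p₀ * p₁) * F := by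
    calc (star u₀ ⬝ᵥ u₁).re ≤ ‖star u₀ ⬝ᵥ u₁‖ := Complex.re_le_norm _
      _ = Real.sqrt (‖star u₀ ⬝ᵥ u₁‖ ^ 2) :=
          (Real.sqrt_sq (norm_nonneg _)).symm
      _ ≤ Real.sqrt (p₀ * p₁ * fid σ₀ σ₁) := Real.sqrt_le_sqrt hcross2
      _ = Real.sqrt (p₀ * p₁) * F := by
          rw [hF, Real.sqrt_mul (mul_nonneg hq₀ hq₁)]
  -- expansion of ‖u₀+u₁‖²
  have hsum : en (u₀ + u₁) = p₀ + p₁ + 2 * (star u₀ ⬝ᵥ u₁).re := by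
    rw [en_eq_re_dot]
    have hexp : star (u₀ + u₁) ⬝ᵥ (u₀ + u₁)
        = star u₀ ⬝ᵥ u₀ + star u₁ ⬝ᵥ u₁ + (star u₀ ⬝ᵥ u₁ + star u₁ ⬝ᵥ u₀) := by
      rw [star_add, add_dotProduct, dotProduct_add, dotProduct_add]
      ring
    have hc : star u₁ ⬝ᵥ u₀ = star (star u₀ ⬝ᵥ u₁) := by
      rw [Matrix.star_dotProduct]
    rw [hexp, hc, dot_self_eq_en, dot_self_eq_en, hC0, hC1]
    simp only [Complex.add_re, Complex.ofReal_re, RCLike.star_def, Complex.conj_re]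
    ring
  have hS1 : (p₀ : ℝ) + p₁ = (star Ψ ⬝ᵥ (u₀ + u₁)).re := by
    rw [dotProduct_add, hB0, hB1]
    simp
  have hΨ1 : en Ψ = 1 := hΨ
  have hS2 : p₀ + p₁ ≤ Real.sqrt (en (u₀ + u₁)) := by
    rw [hS1]
    calc (star Ψ ⬝ᵥ (u₀ + u₁)).re ≤ ‖star Ψ ⬝ᵥ (u₀ + u₁)‖ := Complex.re_le_norm _
      _ ≤ Real.sqrt (en Ψ) * Real.sqrt (en (u₀ + u₁)) := abs_dot_le _ _
      _ = Real.sqrt (en (u₀ + u₁)) := by rw [hΨ1, Real.sqrt_one, one_mul]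
  have hgm : Real.sqrt (p₀ * p₁) ≤ (p₀ + p₁) / 2 := by
    have h1 : p₀ * p₁ ≤ ((p₀ + p₁) / 2) ^ 2 := by nlinarith [sq_nonneg (p₀ - p₁)]
    calc Real.sqrt (p₀ * p₁) ≤ Real.sqrt (((p₀ + p₁) / 2) ^ 2) := Real.sqrt_le_sqrt h1
      _ = (p₀ + p₁) / 2 := Real.sqrt_sq (by linarith)
  have hs0 : 0 ≤ p₀ + p₁ := by linarith
  have hen_le : en (u₀ + u₁) ≤ (p₀ + p₁) + (p₀ + p₁) * F := by
    rw [hsum]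
    have h2 : (star u₀ ⬝ᵥ u₁).re ≤ ((p₀ + p₁) / 2) * F :=
      hcross.trans (mul_le_mul_of_nonneg_right hgm hFnn)
    linarith
  have hfinal : p₀ + p₁ ≤ Real.sqrt ((p₀ + p₁) + (p₀ + p₁) * F) :=
    hS2.trans (Real.sqrt_le_sqrt hen_le)
  have hsq : (p₀ + p₁) ^ 2 ≤ (p₀ + p₁) + (p₀ + p₁) * F := by
    have h3 := pow_le_pow_left₀ hs0 hfinal 2
    rwa [Real.sq_sqrt (by nlinarith)] at h3
  rcases le_or_gt (p₀ + p₁) (1 + F) with h | h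
  · exact h
  · nlinarith
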